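/- Let A be an m×n real matrix and let A₁₁ be a nonsingular k×k submatrix of A having local ρ-maximum volume in A for some ρ ≥ 1. Then σ_k(A) ≥ σ_min(A₁₁) ≥ σ_k(A)/(ρk√((m−k+1)(n−k+1))), where σ_min(A₁₁) = σ_k(A₁₁) is the smallest singular value of A₁₁. -/

import Mathlib

/-!
The first inequality is interlacing: on the `k`-dimensional space of vectors supported on the
columns of `A₁₁` we have `‖A x‖ ≥ ‖A₁₁ x‖ ≥ σ_k(A₁₁) ‖x‖`, and Courant–Fischer turns this into
`σ_k(A) ≥ σ_k(A₁₁)`.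

For the second, write `(A₁₁⁻¹)_{ab} = adj(A₁₁)_{ab} / det A₁₁`; up to sign the numerator is
`det B`, where `B` is `A₁₁` with row `b` and column `a` deleted. The cross approximation
`X = C B⁻¹ R` built on `B` has rank `k - 1`, so `σ_k(A) ≤ ‖A - X‖_F`. Each entry of `A - X` is a
Schur complement `det B' / det B`, where the bordered matrix `B'` is `A₁₁` with at most one row
and one column exchanged, so local maximality bounds it by `ρ |det A₁₁| / |det B|`; it vanishes
unless its row is `b` or outside `A₁₁` and its column is `a` or outside `A₁₁`. Hence
`|(A₁₁⁻¹)_{ab}| σ_k(A) ≤ ρ √((m-k+1)(n-k+1))`, and `σ_min(A₁₁) ≥ 1 / ‖A₁₁⁻¹‖_F` with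
`‖A₁₁⁻¹‖_F ≤ k max |(A₁₁⁻¹)_{ab}|` finishes the proof.
-/

open Matrix

/-- The `k`-th largest value (1-indexed) of a finite family of reals. -/
noncomputable def kthLargest {ι : Type*} [Fintype ι] (f : ι → ℝ) (k : ℕ) : ℝ :=
  ((Finset.univ.val.map f).sort (· ≤ ·)).getD (Fintype.card ι - k) 0

/-- The `k`-th largest singular value (1-indexed) of a real matrix,
i.e. the square root of the `k`-th largest eigenvalue of `Aᴴ * A`. -/
noncomputable def singularValue {m n : Type*} [Fintype m] [Fintype n] [DecidableEq n]
    (A : Matrix m n ℝ) (k : ℕ) : ℝ :=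
  Real.sqrt (kthLargest (show (Aᵀ * A).IsHermitian by
    simpa only [Matrix.conjTranspose_eq_transpose_of_trivial] using
      Matrix.isHermitian_conjTranspose_mul_self A).eigenvalues k)

open Finset Submodule Module

lemma Function.Injective.update {α β : Type*} [DecidableEq α] {f : α → β}
    (hf : Function.Injective f) (a : α) {b : β} (hb : b ∉ Set.range f) :
    Function.Injective (Function.update f a b) := by
  intro x y h
  by_cases hx : x = a <;> by_cases hy : y = a <;>
    simp only [Function.update_apply, hx, hy, if_true, if_false] at h
  · exact hx.trans hy.symm
  · exact absurd ⟨y, h.symm⟩ hb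
  · exact absurd ⟨x, h⟩ hb
  · exact hf h

def finSuccEquivSum {k : ℕ} (l : Fin (k + 1)) : Fin (k + 1) ≃ Fin k ⊕ Unit :=
  (finSuccEquiv' l).trans (Equiv.optionEquivSumPUnit _)

lemma update_comp_finSuccEquivSum_symm {α : Type*} {k : ℕ} (f : Fin (k + 1) → α)
    (l : Fin (k + 1)) (x : α) :
    Function.update f l x ∘ (finSuccEquivSum l).symm = Sum.elim (l.removeNth f) fun _ => x := by
  ext (a | _)
  · simp [finSuccEquivSum, Fin.removeNth]
  · simp [finSuccEquivSum]

lemma Submodule.exists_mem_inf_ne_zero_of_finrank_lt {K V : Type*} [DivisionRing K]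
    [AddCommGroup V] [Module K V] [FiniteDimensional K V] (s t : Submodule K V)
    (h : finrank K V < finrank K s + finrank K t) : ∃ x ∈ s ⊓ t, x ≠ 0 := by
  refine exists_mem_ne_zero_of_ne_bot fun hbot => ?_
  have := finrank_sup_add_finrank_inf_eq s t
  rw [hbot, finrank_bot] at this
  have := (s ⊔ t).finrank_le
  omega

lemma sum_le_card_add_one_mul {ι γ : Type*} [Fintype ι] [Fintype γ] {g : ι ⊕ γ → ℝ} (j : ι)
    (hg : ∀ a ≠ j, g (Sum.inl a) = 0) {b : ℝ} (hb : ∀ p, g p ≤ b) :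
    ∑ p, g p ≤ (Fintype.card γ + 1) * b := by
  rw [Fintype.sum_sum_type, sum_eq_single j (fun a _ ha => hg a ha) (by simp)]
  have := sum_le_card_nsmul univ (g ∘ Sum.inr) b fun p _ => hb _
  simp only [card_univ, nsmul_eq_mul, Function.comp_apply] at this
  linarith [hb (Sum.inl j)]

section KthLargest

variable {ι : Type*} [Fintype ι] (f : ι → ℝ)

lemma length_sort_map_univ : ((univ.val.map f).sort (· ≤ ·)).length = Fintype.card ι := by
  rw [Multiset.length_sort, Multiset.card_map]; rfl

lemma card_filter_eq_countP_sort (p : ℝ → Prop) [DecidablePred p] :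
    #{i | p (f i)} = ((univ.val.map f).sort (· ≤ ·)).countP (p ·) := by
  rw [← Multiset.coe_countP, Multiset.sort_eq, Multiset.countP_map, card_def, filter_val]

lemma kthLargest_zero : kthLargest f 0 = 0 := by
  simp [kthLargest]

lemma kthLargest_nonneg (hf : ∀ i, 0 ≤ f i) (k : ℕ) : 0 ≤ kthLargest f k := by
  rw [kthLargest, List.getD_eq_getElem?_getD]
  cases h : ((univ.val.map f).sort (· ≤ ·))[Fintype.card ι - k]? with
  | none => exact le_rfl
  | some x =>
    obtain ⟨i, -, rfl⟩ := Multiset.mem_map.1 ((Multiset.mem_sort _).1 (List.mem_of_getElem? h))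
    exact hf i

lemma kthLargest_eq_getElem {k : ℕ} (hk₀ : 1 ≤ k) (hk : k ≤ Fintype.card ι) :
    kthLargest f k = ((univ.val.map f).sort (· ≤ ·))[Fintype.card ι - k]'(by
      rw [length_sort_map_univ]; omega) :=
  List.getD_eq_getElem _ _ _

lemma List.Pairwise.length_sub_le_countP_getElem_le {α : Type*} [Preorder α] [DecidableLE α]
    {l : List α} (hl : l.Pairwise (· ≤ ·)) (n : ℕ) (hn : n < l.length) : l.length - n ≤ l.countP (l[n] ≤ ·) := by
  calc l.length - n = (l.drop n).countP (l[n] ≤ ·) := by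
        rw [List.countP_eq_length.2, List.length_drop]
        intro x hx
        obtain ⟨m, hm, rfl⟩ := List.getElem_of_mem hx
        rw [List.getElem_drop]
        simpa using hl.rel_get_of_le (a := ⟨n, hn⟩) (b := ⟨n + m, by simp at hm; omega⟩) (by simp)
    _ ≤ l.countP (l[n] ≤ ·) := (List.drop_sublist n l).countP_le

lemma List.Pairwise.succ_le_countP_le_getElem {α : Type*} [Preorder α] [DecidableLE α]
    {l : List α} (hl : l.Pairwise (· ≤ ·)) (n : ℕ) (hn : n < l.length) : n + 1 ≤ l.countP (· ≤ l[n]) := by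
  calc n + 1 = (l.take (n + 1)).countP (· ≤ l[n]) := by
        rw [List.countP_eq_length.2, List.length_take]
        · omega
        intro x hx
        obtain ⟨m, hm, rfl⟩ := List.getElem_of_mem hx
        rw [List.getElem_take]
        simpa using hl.rel_get_of_le (a := ⟨m, by simp at hm; omega⟩) (b := ⟨n, hn⟩)
          (by simp at hm ⊢; omega)
    _ ≤ l.countP (· ≤ l[n]) := (List.take_sublist _ l).countP_le

lemma le_card_filter_kthLargest_le {k : ℕ} (hk₀ : 1 ≤ k) (hk : k ≤ Fintype.card ι) :
    k ≤ #{i | kthLargest f k ≤ f i} := by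
  have hl := (univ.val.map f).pairwise_sort (· ≤ ·)
  have := hl.length_sub_le_countP_getElem_le (Fintype.card ι - k)
    (by rw [length_sort_map_univ]; omega)
  have hlen := length_sort_map_univ f
  rw [card_filter_eq_countP_sort f (kthLargest f k ≤ ·), kthLargest_eq_getElem f hk₀ hk]
  omega

lemma card_sub_lt_card_filter_le_kthLargest {k : ℕ} (hk₀ : 1 ≤ k) (hk : k ≤ Fintype.card ι) :
    Fintype.card ι - k < #{i | f i ≤ kthLargest f k} := by
  have hl := (univ.val.map f).pairwise_sort (· ≤ ·)
  have := hl.succ_le_countP_le_getElem (Fintype.card ι - k) (by rw [length_sort_map_univ]; omega)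
  rw [card_filter_eq_countP_sort f (· ≤ kthLargest f k), kthLargest_eq_getElem f hk₀ hk]
  omega

end KthLargest

namespace Matrix.IsHermitian

variable {ι : Type*} [Fintype ι] [DecidableEq ι] {H : Matrix ι ι ℝ} (hH : H.IsHermitian)

lemma dotProduct_eigenvectorBasis (i j : ι) :
    ⇑(hH.eigenvectorBasis i) ⬝ᵥ ⇑(hH.eigenvectorBasis j) = if i = j then 1 else 0 := by
  have := orthonormal_iff_ite.1 hH.eigenvectorBasis.orthonormal i j
  rwa [EuclideanSpace.inner_eq_star_dotProduct, star_trivial, dotProduct_comm] at this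

lemma linearIndependent_eigenvectorBasis :
    LinearIndependent ℝ fun i => ⇑(hH.eigenvectorBasis i) :=
  hH.eigenvectorBasis.toBasis.linearIndependent.map' (WithLp.linearEquiv 2 ℝ (ι → ℝ)).toLinearMap
    (LinearEquiv.ker _)

noncomputable def spanEigenvectors (s : Set ι) : Submodule ℝ (ι → ℝ) :=
  span ℝ ((fun i => ⇑(hH.eigenvectorBasis i)) '' s)

lemma spanEigenvectors_univ : hH.spanEigenvectors Set.univ = ⊤ := by
  rw [spanEigenvectors, Set.image_univ]
  exact hH.linearIndependent_eigenvectorBasis.span_eq_top_of_card_eq_finrank'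
    (finrank_fintype_fun_eq_card ℝ).symm

lemma finrank_spanEigenvectors (T : Finset ι) : finrank ℝ (hH.spanEigenvectors T) = #T := by
  rw [spanEigenvectors, Set.image_eq_range]
  exact (finrank_span_eq_card (hH.linearIndependent_eigenvectorBasis.comp _
    Subtype.val_injective)).trans (Fintype.card_coe T)

lemma exists_sum_sq_of_mem_spanEigenvectors {s : Set ι} {u : ι → ℝ}
    (hu : u ∈ hH.spanEigenvectors s) :
    ∃ S : Finset ι, ∃ c : ι → ℝ, ↑S ⊆ s ∧ u ⬝ᵥ u = ∑ i ∈ S, c i ^ 2 ∧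
      u ⬝ᵥ (H *ᵥ u) = ∑ i ∈ S, hH.eigenvalues i * c i ^ 2 := by
  obtain ⟨c, hc, rfl⟩ := Finsupp.mem_span_image_iff_linearCombination ℝ |>.1 hu
  refine ⟨c.support, c, (Finsupp.mem_supported _ _).1 hc, ?_, ?_⟩ <;>
    simp only [Finsupp.linearCombination_apply, Finsupp.sum, mulVec_sum, mulVec_smul,
      mulVec_eigenvectorBasis, dotProduct_sum, dotProduct_smul, sum_dotProduct, smul_dotProduct,
      dotProduct_eigenvectorBasis, smul_eq_mul, mul_ite, mul_one, mul_zero, sum_ite_eq']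
  all_goals exact sum_congr rfl fun i hi => by rw [if_pos hi]; ring

lemma mul_dotProduct_le_of_mem_spanEigenvectors {s : Set ι} {t : ℝ}
    (ht : ∀ i ∈ s, t ≤ hH.eigenvalues i)
    {u : ι → ℝ} (hu : u ∈ hH.spanEigenvectors s) :
    t * (u ⬝ᵥ u) ≤ u ⬝ᵥ (H *ᵥ u) := by
  obtain ⟨S, c, hS, hnorm, hquad⟩ := hH.exists_sum_sq_of_mem_spanEigenvectors hu
  rw [hnorm, hquad, mul_sum]
  exact sum_le_sum fun i hi => mul_le_mul_of_nonneg_right (ht i (hS hi)) (sq_nonneg _)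

lemma dotProduct_mulVec_le_of_mem_spanEigenvectors {s : Set ι} {t : ℝ}
    (ht : ∀ i ∈ s, hH.eigenvalues i ≤ t)
    {u : ι → ℝ} (hu : u ∈ hH.spanEigenvectors s) :
    u ⬝ᵥ (H *ᵥ u) ≤ t * (u ⬝ᵥ u) := by
  obtain ⟨S, c, hS, hnorm, hquad⟩ := hH.exists_sum_sq_of_mem_spanEigenvectors hu
  rw [hnorm, hquad, mul_sum]
  exact sum_le_sum fun i hi => mul_le_mul_of_nonneg_right (ht i (hS hi)) (sq_nonneg _)

end Matrix.IsHermitian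

namespace Matrix

lemma dotProduct_self_nonneg {R β : Type*} [Ring R] [LinearOrder R] [IsStrictOrderedRing R]
    [Fintype β] (u : β → R) : 0 ≤ u ⬝ᵥ u :=
  sum_nonneg fun i _ => mul_self_nonneg (u i)

lemma dotProduct_self_pos {R β : Type*} [Ring R] [LinearOrder R] [IsStrictOrderedRing R]
    [Fintype β] {u : β → R} (hu : u ≠ 0) : 0 < u ⬝ᵥ u :=
  (dotProduct_self_nonneg u).lt_of_ne (Ne.symm (dotProduct_self_eq_zero.not.2 hu))

variable {α β : Type*} [Fintype α]

lemma dotProduct_mulVec_self_le [Fintype β] (E : Matrix α β ℝ) (u : β → ℝ) :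
    (E *ᵥ u) ⬝ᵥ (E *ᵥ u) ≤ (∑ i, ∑ j, E i j ^ 2) * (u ⬝ᵥ u) :=
  calc (E *ᵥ u) ⬝ᵥ (E *ᵥ u) = ∑ i, (∑ j, E i j * u j) ^ 2 := by simp [dotProduct, mulVec, sq]
    _ ≤ ∑ i, (∑ j, E i j ^ 2) * ∑ j, u j ^ 2 :=
        sum_le_sum fun i _ => sum_mul_sq_le_sq_mul_sq _ _ _
    _ = (∑ i, ∑ j, E i j ^ 2) * (u ⬝ᵥ u) := by simp [← sum_mul, dotProduct, sq]

lemma isHermitian_transpose_mul_self (M : Matrix α β ℝ) : (Mᵀ * M).IsHermitian := by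
  simpa only [conjTranspose_eq_transpose_of_trivial] using isHermitian_conjTranspose_mul_self M

variable [Fintype β] (M : Matrix α β ℝ)

lemma dotProduct_transpose_mul_mulVec (u : β → ℝ) :
    u ⬝ᵥ ((Mᵀ * M) *ᵥ u) = (M *ᵥ u) ⬝ᵥ (M *ᵥ u) := by
  rw [← mulVec_mulVec, dotProduct_mulVec, vecMul_transpose]

variable [DecidableEq β]

lemma sq_singularValue (k : ℕ) :
    singularValue M k ^ 2 = kthLargest (isHermitian_transpose_mul_self M).eigenvalues k :=
  Real.sq_sqrt (kthLargest_nonneg _ (posSemidef_conjTranspose_mul_self M).eigenvalues_nonneg k)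

lemma singularValue_le_of_finrank_lt {k : ℕ} (hk₀ : 1 ≤ k) (hk : k ≤ Fintype.card β)
    (V : Submodule ℝ (β → ℝ)) (hV : Fintype.card β < finrank ℝ V + k) {c : ℝ} (hc : 0 ≤ c)
    (hM : ∀ u ∈ V, (M *ᵥ u) ⬝ᵥ (M *ᵥ u) ≤ c ^ 2 * (u ⬝ᵥ u)) : singularValue M k ≤ c := by
  set hH := isHermitian_transpose_mul_self M
  have hcard := le_card_filter_kthLargest_le hH.eigenvalues hk₀ hk
  set t := kthLargest hH.eigenvalues k
  -- Courant–Fischer: `V` meets the span of the eigenvectors of `Mᵀ * M` with eigenvalue `≥ t`.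
  obtain ⟨u, ⟨huV, huW⟩, hu⟩ := V.exists_mem_inf_ne_zero_of_finrank_lt
    (hH.spanEigenvectors ↑({i | t ≤ hH.eigenvalues i} : Finset β)) (by
      rw [finrank_fintype_fun_eq_card, hH.finrank_spanEigenvectors]
      omega)
  have hray := hH.mul_dotProduct_le_of_mem_spanEigenvectors (fun i hi => (mem_filter.1 hi).2) huW
  rw [dotProduct_transpose_mul_mulVec] at hray
  have ht : t ≤ c ^ 2 :=
    le_of_mul_le_mul_right (hray.trans (hM u huV)) (dotProduct_self_pos hu)
  exact Real.sqrt_le_iff.2 ⟨hc, ht⟩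

lemma le_singularValue_of_le_finrank {k : ℕ} (hk₀ : 1 ≤ k) (V : Submodule ℝ (β → ℝ))
    (hV : k ≤ finrank ℝ V) {c : ℝ} (hM : ∀ u ∈ V, c ^ 2 * (u ⬝ᵥ u) ≤ (M *ᵥ u) ⬝ᵥ (M *ᵥ u)) :
    c ≤ singularValue M k := by
  set hH := isHermitian_transpose_mul_self M
  have hV' := V.finrank_le
  rw [finrank_fintype_fun_eq_card] at hV'
  have hcard := card_sub_lt_card_filter_le_kthLargest hH.eigenvalues hk₀ (hV.trans hV')
  set t := kthLargest hH.eigenvalues k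
  -- Courant–Fischer: `V` meets the span of the eigenvectors of `Mᵀ * M` with eigenvalue `≤ t`.
  obtain ⟨u, ⟨huV, huW⟩, hu⟩ := V.exists_mem_inf_ne_zero_of_finrank_lt
    (hH.spanEigenvectors ↑({i | hH.eigenvalues i ≤ t} : Finset β)) (by
      rw [finrank_fintype_fun_eq_card, hH.finrank_spanEigenvectors]
      omega)
  have hray := hH.dotProduct_mulVec_le_of_mem_spanEigenvectors (fun i hi => (mem_filter.1 hi).2)
    huW
  rw [dotProduct_transpose_mul_mulVec] at hray
  have ht : c ^ 2 ≤ t :=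
    le_of_mul_le_mul_right ((hM u huV).trans hray) (dotProduct_self_pos hu)
  exact (le_abs_self c).trans (Real.abs_le_sqrt ht)

lemma sq_singularValue_card_mul_le (u : β → ℝ) :
    singularValue M (Fintype.card β) ^ 2 * (u ⬝ᵥ u) ≤ (M *ᵥ u) ⬝ᵥ (M *ᵥ u) := by
  rcases isEmpty_or_nonempty β with hβ | hβ
  · simp [dotProduct, mulVec]
  set hH := isHermitian_transpose_mul_self M
  have hmin : ∀ i, kthLargest hH.eigenvalues (Fintype.card β) ≤ hH.eigenvalues i := by
    have := le_card_filter_kthLargest_le hH.eigenvalues Fintype.card_pos le_rfl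
    exact fun i => filter_eq_self.1 (eq_univ_of_card _ (this.antisymm' (card_le_univ _))) i
      (mem_univ i)
  have := hH.mul_dotProduct_le_of_mem_spanEigenvectors (s := Set.univ) (fun i _ => hmin i)
    (u := u) (hH.spanEigenvectors_univ ▸ mem_top)
  rwa [dotProduct_transpose_mul_mulVec, ← sq_singularValue] at this

lemma singularValue_le_of_rank_lt (X : Matrix α β ℝ) {k : ℕ} (hk₀ : 1 ≤ k)
    (hk : k ≤ Fintype.card β) (hX : X.rank < k) :
    singularValue M k ≤ √(∑ i, ∑ j, (M - X) i j ^ 2) := by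
  refine M.singularValue_le_of_finrank_lt hk₀ hk (LinearMap.ker X.mulVecLin) ?_
    (Real.sqrt_nonneg _) fun u hu => ?_
  · have := X.mulVecLin.finrank_range_add_finrank_ker
    rw [finrank_fintype_fun_eq_card] at this
    have hrank : X.rank = finrank ℝ (LinearMap.range X.mulVecLin) := rfl
    omega
  · rw [LinearMap.mem_ker, mulVecLin_apply] at hu
    rw [Real.sq_sqrt (by positivity)]
    simpa [sub_mulVec, hu] using (M - X).dotProduct_mulVec_self_le u

lemma singularValue_card_le_fromBlocks {ι κ γ : Type*} [Fintype ι] [Fintype κ] [Fintype γ]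
    [DecidableEq ι] [DecidableEq κ] (A₁₁ : Matrix α ι ℝ) (A₁₂ : Matrix α κ ℝ)
    (A₂₁ : Matrix γ ι ℝ) (A₂₂ : Matrix γ κ ℝ) :
    singularValue A₁₁ (Fintype.card ι) ≤
      singularValue (fromBlocks A₁₁ A₁₂ A₂₁ A₂₂) (Fintype.card ι) := by
  rcases isEmpty_or_nonempty ι with hι | hι
  · simp [singularValue, kthLargest_zero]
  set restrict := LinearMap.funLeft ℝ ℝ (Sum.inr : κ → ι ⊕ κ)
  refine le_singularValue_of_le_finrank _ Fintype.card_pos (LinearMap.ker restrict) ?_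
    fun u hu => ?_
  · have := restrict.finrank_range_add_finrank_ker
    have := (LinearMap.range restrict).finrank_le
    simp only [finrank_fintype_fun_eq_card, Fintype.card_sum] at *
    omega
  · have hu : u = Sum.elim (u ∘ Sum.inl) 0 := by
      ext (i | j)
      · rfl
      · exact congrFun (LinearMap.mem_ker.1 hu) j
    rw [hu, fromBlocks_mulVec]
    simp only [Sum.elim_comp_inl, Sum.elim_comp_inr, mulVec_zero, add_zero,
      sumElim_dotProduct_sumElim, dotProduct_zero]
    linarith [sq_singularValue_card_mul_le A₁₁ (u ∘ Sum.inl),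
      dotProduct_self_nonneg (A₂₁ *ᵥ (u ∘ Sum.inl))]

lemma le_singularValue_card_of_abs_inv_mul_le {ι : Type*} [Fintype ι] [DecidableEq ι]
    (B : Matrix ι ι ℝ) (hB : IsUnit B.det) {c μ : ℝ} (hc : 0 ≤ c)
    (h : ∀ a b, |B⁻¹ a b| * c ≤ μ) :
    c / (Fintype.card ι * μ) ≤ singularValue B (Fintype.card ι) := by
  rcases isEmpty_or_nonempty ι with hι | hι
  · simp [singularValue, kthLargest_zero]
  have hF : c ^ 2 * ∑ a, ∑ b, B⁻¹ a b ^ 2 ≤ (Fintype.card ι * μ) ^ 2 :=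
    calc c ^ 2 * ∑ a, ∑ b, B⁻¹ a b ^ 2 = ∑ a, ∑ b, (|B⁻¹ a b| * c) ^ 2 := by
          simp only [mul_sum, mul_pow, sq_abs, mul_comm]
      _ ≤ ∑ _a : ι, ∑ _b : ι, μ ^ 2 := by
          gcongr with a _ b _
          exact h a b
      _ = (Fintype.card ι * μ) ^ 2 := by simp; ring
  refine le_singularValue_of_le_finrank B Fintype.card_pos ⊤ (by simp) fun u _ => ?_
  calc (c / (Fintype.card ι * μ)) ^ 2 * (u ⬝ᵥ u)
      = (c / (Fintype.card ι * μ)) ^ 2 * ((B⁻¹ *ᵥ (B *ᵥ u)) ⬝ᵥ (B⁻¹ *ᵥ (B *ᵥ u))) := by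
        rw [mulVec_mulVec, nonsing_inv_mul _ hB, one_mulVec]
    _ ≤ (c / (Fintype.card ι * μ)) ^ 2 *
          ((∑ a, ∑ b, B⁻¹ a b ^ 2) * ((B *ᵥ u) ⬝ᵥ (B *ᵥ u))) := by
        gcongr
        exact dotProduct_mulVec_self_le _ _
    _ = c ^ 2 * (∑ a, ∑ b, B⁻¹ a b ^ 2) / (Fintype.card ι * μ) ^ 2 *
          ((B *ᵥ u) ⬝ᵥ (B *ᵥ u)) := by ring
    _ ≤ 1 * ((B *ᵥ u) ⬝ᵥ (B *ᵥ u)) := by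
        gcongr
        · exact dotProduct_self_nonneg _
        · exact div_le_one_of_le₀ hF (sq_nonneg _)
    _ = (B *ᵥ u) ⬝ᵥ (B *ᵥ u) := one_mul _

open Function

section Submatrix

variable {R α β ι : Type*} [CommRing R] [Fintype ι] [DecidableEq ι]

lemma det_submatrix_update_row_eq_zero (M : Matrix α β R) (r : ι → α) (c : ι → β) {a j : ι}
    (h : a ≠ j) : (M.submatrix (update r j (r a)) c).det = 0 :=
  det_zero_of_row_eq h.symm (funext fun b => by simp [update_of_ne h])

lemma det_submatrix_update_col_eq_zero (M : Matrix α β R) (r : ι → α) (c : ι → β) {b i : ι}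
    (h : b ≠ i) : (M.submatrix r (update c i (c b))).det = 0 :=
  det_zero_of_column_eq h.symm fun a => by simp [update_of_ne h]

end Submatrix

section CrossApproximation

variable {K α β ι : Type*} [Field K] [Fintype ι] [DecidableEq ι]

noncomputable def crossApprox (M : Matrix α β K) (r : ι → α) (c : ι → β) : Matrix α β K :=
  M.submatrix id c * (M.submatrix r c)⁻¹ * M.submatrix r id

lemma rank_crossApprox_le [Fintype β] (M : Matrix α β K) (r : ι → α) (c : ι → β) :
    (crossApprox M r c).rank ≤ Fintype.card ι :=
  (rank_mul_le_left _ _).trans ((rank_mul_le_left _ _).trans (rank_le_card_width _))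

lemma det_submatrix_sumElim (M : Matrix α β K) (r : ι → α) (c : ι → β)
    (hB : IsUnit (M.submatrix r c).det) (p : α) (q : β) :
    (M.submatrix (Sum.elim r fun _ : Unit => p) (Sum.elim c fun _ : Unit => q)).det =
      (M.submatrix r c).det * (M - crossApprox M r c) p q := by
  have := (M.submatrix r c).invertibleOfIsUnitDet hB
  have hblocks : M.submatrix (Sum.elim r fun _ : Unit => p) (Sum.elim c fun _ : Unit => q) =
      fromBlocks (M.submatrix r c) (of fun a (_ : Unit) => M (r a) q)
        (of fun (_ : Unit) b => M p (c b)) (of fun _ _ => M p q) := by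
    ext (a | _) (b | _) <;> rfl
  rw [hblocks, det_fromBlocks₁₁, invOf_eq_nonsing_inv, det_unique (n := Unit)]
  rfl

lemma abs_det_submatrix_update [LinearOrder K] [IsStrictOrderedRing K] {k : ℕ}
    (M : Matrix α β K) (r : Fin (k + 1) → α) (c : Fin (k + 1) → β) (i j : Fin (k + 1))
    (hB : IsUnit (M.submatrix (j.removeNth r) (i.removeNth c)).det) (p : α) (q : β) :
    |(M.submatrix (update r j p) (update c i q)).det| =
      |(M.submatrix (j.removeNth r) (i.removeNth c)).det| *
        |(M - crossApprox M (j.removeNth r) (i.removeNth c)) p q| := by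
  rw [← abs_det_submatrix_equiv_equiv (finSuccEquivSum j).symm (finSuccEquivSum i).symm,
    submatrix_submatrix, update_comp_finSuccEquivSum_symm, update_comp_finSuccEquivSum_symm,
    det_submatrix_sumElim _ _ _ hB, abs_mul]

end CrossApproximation

lemma sum_sq_det_submatrix_update_le {ι γ δ : Type*} [Fintype ι] [DecidableEq ι] [Fintype γ]
    [Fintype δ] (M : Matrix (ι ⊕ γ) (ι ⊕ δ) ℝ) (i j : ι) {v : ℝ}
    (hv : ∀ p q, |(M.submatrix (update Sum.inl j p) (update Sum.inl i q)).det| ≤ v) :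
    ∑ p, ∑ q, (M.submatrix (update Sum.inl j p) (update Sum.inl i q)).det ^ 2 ≤
      (Fintype.card γ + 1) * ((Fintype.card δ + 1) * v ^ 2) := by
  refine sum_le_card_add_one_mul j (fun a ha => sum_eq_zero fun q _ => ?_) fun p =>
    sum_le_card_add_one_mul i (fun b hb => ?_) fun q => ?_
  · rw [det_submatrix_update_row_eq_zero _ _ _ ha, sq, zero_mul]
  · rw [det_submatrix_update_col_eq_zero _ _ _ hb, sq, zero_mul]
  · exact sq_le_sq' (abs_le.1 (hv p q)).1 (abs_le.1 (hv p q)).2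

lemma abs_adjugate_toBlocks₁₁_mul_singularValue_le {k : ℕ} {γ δ : Type*} [Fintype γ]
    [Fintype δ] [DecidableEq δ] (M : Matrix (Fin (k + 1) ⊕ γ) (Fin (k + 1) ⊕ δ) ℝ)
    (i j : Fin (k + 1)) {v : ℝ}
    (hv : ∀ p q, |(M.submatrix (update Sum.inl j p) (update Sum.inl i q)).det| ≤ v) :
    |M.toBlocks₁₁.adjugate i j| * singularValue M (k + 1) ≤
      √((Fintype.card γ + 1) * (Fintype.card δ + 1)) * v := by
  set r := j.removeNth (Sum.inl : Fin (k + 1) → Fin (k + 1) ⊕ γ)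
  set c := i.removeNth (Sum.inl : Fin (k + 1) → Fin (k + 1) ⊕ δ)
  have hadj : |M.toBlocks₁₁.adjugate i j| = |(M.submatrix r c).det| := by
    rw [adjugate_fin_succ_eq_det_submatrix, abs_mul, abs_pow, abs_neg, abs_one, one_pow, one_mul]
    rfl
  have hv0 : 0 ≤ v := (abs_nonneg _).trans (hv (Sum.inl j) (Sum.inl i))
  rw [hadj]
  by_cases hB : (M.submatrix r c).det = 0
  · rw [hB, abs_zero, zero_mul]
    positivity
  have hterm : ∀ p q, (M.submatrix r c).det ^ 2 * (M - crossApprox M r c) p q ^ 2 =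
      (M.submatrix (update Sum.inl j p) (update Sum.inl i q)).det ^ 2 := fun p q => by
    rw [← sq_abs (M.submatrix (update Sum.inl j p) (update Sum.inl i q)).det,
      abs_det_submatrix_update M _ _ i j (Ne.isUnit hB), mul_pow, sq_abs, sq_abs]
  calc |(M.submatrix r c).det| * singularValue M (k + 1)
      ≤ |(M.submatrix r c).det| * √(∑ p, ∑ q, (M - crossApprox M r c) p q ^ 2) := by
        gcongr
        exact M.singularValue_le_of_rank_lt _ (by omega) (by simp)
          ((rank_crossApprox_le M r c).trans_lt (by simp))
    _ = √(∑ p, ∑ q, (M.submatrix (update Sum.inl j p) (update Sum.inl i q)).det ^ 2) := by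
        rw [← Real.sqrt_sq_eq_abs, ← Real.sqrt_mul (sq_nonneg _), mul_sum]
        simp_rw [mul_sum, hterm]
    _ ≤ √((Fintype.card γ + 1) * ((Fintype.card δ + 1) * v ^ 2)) :=
        Real.sqrt_le_sqrt (sum_sq_det_submatrix_update_le M i j hv)
    _ = √((Fintype.card γ + 1) * (Fintype.card δ + 1)) * v := by
        rw [← mul_assoc, Real.sqrt_mul (by positivity), Real.sqrt_sq hv0]

lemma abs_det_submatrix_update_le_of_local_maxvol {ι γ δ : Type*} [Fintype ι] [DecidableEq ι]
    (A₁₁ : Matrix ι ι ℝ) (A₁₂ : Matrix ι δ ℝ) (A₂₁ : Matrix γ ι ℝ) (A₂₂ : Matrix γ δ ℝ)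
    {ρ : ℝ} (hρ : 1 ≤ ρ)
    (hcol : ∀ (q : δ) (j : ι), |(A₁₁.updateCol j (fun i => A₁₂ i q)).det| ≤ ρ * |A₁₁.det|)
    (hrow : ∀ (p : γ) (i : ι), |(A₁₁.updateRow i (fun j => A₂₁ p j)).det| ≤ ρ * |A₁₁.det|)
    (hloc : ∀ (p : γ) (q : δ) (r c : ι → ι ⊕ Unit), Injective r → Injective c →
      |((fromBlocks A₁₁ (of fun i (_ : Unit) => A₁₂ i q) (of fun (_ : Unit) j => A₂₁ p j)
          (of fun (_ : Unit) (_ : Unit) => A₂₂ p q)).submatrix r c).det| ≤ ρ * |A₁₁.det|)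
    (i j : ι) (p : ι ⊕ γ) (q : ι ⊕ δ) :
    |((fromBlocks A₁₁ A₁₂ A₂₁ A₂₂).submatrix (update Sum.inl j p) (update Sum.inl i q)).det| ≤
      ρ * |A₁₁.det| := by
  have hρ0 : 0 ≤ ρ * |A₁₁.det| := mul_nonneg (by linarith) (abs_nonneg _)
  -- Unless a row or column of `A₁₁` is repeated, the submatrix is `A₁₁` with its `j`-th row
  -- and `i`-th column possibly exchanged for ones outside `A₁₁`.
  rcases p with a | p
  · obtain rfl | ha := eq_or_ne a j
    swap
    · rw [det_submatrix_update_row_eq_zero _ _ _ ha, abs_zero]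
      exact hρ0
    rcases q with b | q
    · obtain rfl | hb := eq_or_ne b i
      swap
      · rw [det_submatrix_update_col_eq_zero _ _ _ hb, abs_zero]
        exact hρ0
      rw [update_eq_self, update_eq_self]
      exact le_mul_of_one_le_left (abs_nonneg _) hρ
    · convert hcol q i using 4
      ext a' b
      rcases eq_or_ne b i with rfl | hb <;> simp [*]
  · rcases q with b | q
    · obtain rfl | hb := eq_or_ne b i
      swap
      · rw [det_submatrix_update_col_eq_zero _ _ _ hb, abs_zero]
        exact hρ0
      convert hrow p j using 4
      ext a' b
      rcases eq_or_ne a' j with rfl | ha <;> simp [*]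
    · have hinj (l : ι) : Injective (update (Sum.inl : ι → ι ⊕ Unit) l (Sum.inr ())) :=
        Sum.inl_injective.update l (by simp)
      convert hloc p q _ _ (hinj j) (hinj i) using 4
      ext a b
      rcases eq_or_ne a j with rfl | ha <;> rcases eq_or_ne b i with rfl | hb <;> simp [*]

end Matrix

/-- Let `A = [[A₁₁, A₁₂], [A₂₁, A₂₂]]` be an `m × n` real matrix whose leading `k × k` block
`A₁₁` is nonsingular and has local `ρ`-maximum volume in `A` for some `ρ ≥ 1`: exchanging
one column of `A₁₁` with a column of `A₁₂`, one row of `A₁₁` with a row of `A₂₁`, or one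
row and one column simultaneously (equivalently, `A₁₁` has global `ρ`-maximum volume in
every `(k+1) × (k+1)` submatrix of `A` containing it) cannot increase the volume of `A₁₁`
by more than the factor `ρ`.  Then `σ_k(A) ≥ σ_min(A₁₁) ≥ σ_k(A) / (ρ k √((m−k+1)(n−k+1)))`,
where `σ_min(A₁₁) = σ_k(A₁₁)` is the smallest singular value of `A₁₁`. -/
theorem sigma_min_bounds_of_local_maxvol {k m₂ n₂ : ℕ}
    (A₁₁ : Matrix (Fin k) (Fin k) ℝ) (A₁₂ : Matrix (Fin k) (Fin n₂) ℝ)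
    (A₂₁ : Matrix (Fin m₂) (Fin k) ℝ) (A₂₂ : Matrix (Fin m₂) (Fin n₂) ℝ)
    (hA : IsUnit A₁₁.det) (ρ : ℝ) (hρ : 1 ≤ ρ)
    (hcol : ∀ (q : Fin n₂) (j : Fin k),
      |(A₁₁.updateCol j (fun i => A₁₂ i q)).det| ≤ ρ * |A₁₁.det|)
    (hrow : ∀ (p : Fin m₂) (i : Fin k),
      |(A₁₁.updateRow i (fun j => A₂₁ p j)).det| ≤ ρ * |A₁₁.det|)
    (hloc : ∀ (p : Fin m₂) (q : Fin n₂) (r c : Fin k → Fin k ⊕ Unit),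
      Function.Injective r → Function.Injective c →
      |((Matrix.fromBlocks A₁₁ (Matrix.of fun i (_ : Unit) => A₁₂ i q)
          (Matrix.of fun (_ : Unit) j => A₂₁ p j)
          (Matrix.of fun (_ : Unit) (_ : Unit) => A₂₂ p q)).submatrix r c).det|
        ≤ ρ * |A₁₁.det|) :
    singularValue (Matrix.fromBlocks A₁₁ A₁₂ A₂₁ A₂₂) k ≥ singularValue A₁₁ k ∧
    singularValue A₁₁ k ≥
      singularValue (Matrix.fromBlocks A₁₁ A₁₂ A₂₁ A₂₂) k /
        (ρ * k * Real.sqrt (((m₂ : ℝ) + 1) * ((n₂ : ℝ) + 1))) := by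
  obtain _ | k := k
  · simp [singularValue, kthLargest_zero]
  refine ⟨by simpa using singularValue_card_le_fromBlocks A₁₁ A₁₂ A₂₁ A₂₂, ?_⟩
  have hinv (a b : Fin (k + 1)) :
      |A₁₁⁻¹ a b| * singularValue (fromBlocks A₁₁ A₁₂ A₂₁ A₂₂) (k + 1) ≤
        ρ * √(((m₂ : ℝ) + 1) * ((n₂ : ℝ) + 1)) := by
    have h := abs_adjugate_toBlocks₁₁_mul_singularValue_le _ a b
      (abs_det_submatrix_update_le_of_local_maxvol A₁₁ A₁₂ A₂₁ A₂₂ hρ hcol hrow hloc a b)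
    rw [toBlocks_fromBlocks₁₁, Fintype.card_fin, Fintype.card_fin] at h
    rw [Matrix.inv_def, Matrix.smul_apply, smul_eq_mul, Ring.inverse_eq_inv', abs_mul, abs_inv,
      mul_assoc, inv_mul_le_iff₀ (abs_pos.2 hA.ne_zero)]
    linarith
  have := le_singularValue_card_of_abs_inv_mul_le A₁₁ hA (Real.sqrt_nonneg _) hinv
  rw [Fintype.card_fin, ← mul_assoc, mul_comm ((k + 1 : ℕ) : ℝ) ρ] at this
  exact this
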